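/- arXiv:0909.2314 — 3 statements merged into one kernel-verified Lean document; each statement's English description precedes it below -/
import Mathlib

section
/- Let n ≡ 0 or 1 (mod 4) and let α ∈ S_n be a permutation such that αG = complement of G for some self-complementary graph G on {1,...,n}. Then α has at most one fixed point, and every cycle of α of length at least 2 has length divisible by 4. -/
set_option linter.unusedVariables false

/-- The position `p_{ij}` of the pair `{i,j}` (1-based labels `i<j` in `{1,...,n}`),
namely `(2n-i)(i-1)/2 + (j-i)`, expressed on `Sym2 (Fin n)` (vertex `a : Fin n`
carries the label `a+1`). -/
def pairIndex (n : Nat) (e : Sym2 (Fin n)) : Nat :=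
  Sym2.lift ⟨fun a b =>
      (2 * n - (min a.val b.val + 1)) * (min a.val b.val) / 2
        + (max a.val b.val - min a.val b.val),
    fun a b => by simp [min_comm, max_comm]⟩ e

open scoped Classical in
/-- The index `N(G) = Σ_{ij ∈ E(G)} 2^(λ - p_ij)` of a labelled graph, `λ = C(n,2)`. -/
noncomputable def graphIndex (n : Nat) (G : SimpleGraph (Fin n)) : Nat :=
  ∑ e ∈ G.edgeSet.toFinset, 2 ^ (n.choose 2 - pairIndex n e)

/-- The pair permutation `α'` induced on `Sym2 (Fin n)` by `α'{i,j} = {αi,αj}`. -/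
def pairPerm {n : Nat} (α : Equiv.Perm (Fin n)) : Equiv.Perm (Sym2 (Fin n)) where
  toFun := Sym2.map α
  invFun := Sym2.map α.symm
  left_inv e := by induction e using Sym2.ind with | _ a b => simp
  right_inv e := by induction e using Sym2.ind with | _ a b => simp

/-- The relabelled graph `αG`, whose edge set is `{{αi,αj} : {i,j} ∈ E(G)}`. -/
def mapGraph {n : Nat} (α : Equiv.Perm (Fin n)) (G : SimpleGraph (Fin n)) :
    SimpleGraph (Fin n) where
  Adj a b := G.Adj (α.symm a) (α.symm b)
  symm := ⟨fun a b h => G.symm.symm _ _ h⟩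
  loopless := ⟨fun a h => G.loopless.irrefl _ h⟩

/-!
An antimorphism `α` (an isomorphism `G → Gᶜ`) swaps edges and non-edges, so an odd power
of `α` does too; hence no odd power of `α` can map a pair `{x, y}` to itself. Two fixed
points would give such a pair for `α` itself. On a cycle of length `m` through `x`, the
power `α^m` fixes the pair `{x, α x}`, and if `m = 2t` the power `α^t` swaps `x` and
`α^t x`; one of these exponents is odd unless `4 ∣ m`.
-/

open Equiv

namespace Equiv.Perm

variable {V : Type*} [Fintype V] [DecidableEq V]

theorem exists_odd_pow_fixing_pair_of_not_four_dvd {α : Perm V} {x : V} (hx : α x ≠ x)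
    (h4 : ¬ 4 ∣ (α.cycleOf x).support.card) :
    ∃ k, Odd k ∧ ∃ y ≠ x, s((α ^ k) x, (α ^ k) y) = s(x, y) := by
  set m := (α.cycleOf x).support.card
  have hmem : x ∈ (α.cycleOf x).support :=
    mem_support_cycleOf_iff.mpr ⟨.refl α x, mem_support.mpr hx⟩
  have hfix : ∀ k, (α ^ k) x = x ↔ m ∣ k := fun k =>
    (α.isCycleOn_support_cycleOf x).pow_apply_eq hmem
  have hm : (α ^ m) x = x := (hfix m).mpr dvd_rfl
  rcases Nat.even_or_odd m with ⟨t, ht⟩ | hodd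
  · have hto : Odd t := Nat.odd_iff.mpr (by omega)
    have hmt : ¬ m ∣ t := fun h => by
      have := Nat.le_of_dvd hto.pos h
      omega
    refine ⟨t, hto, (α ^ t) x, fun h => hmt ((hfix t).mp h), ?_⟩
    rw [← Perm.mul_apply, ← pow_add, ← ht, hm, Sym2.eq_swap]
  · refine ⟨m, hodd, α x, hx, ?_⟩
    rw [← Perm.mul_apply, ← pow_succ, pow_succ', Perm.mul_apply, hm]

end Equiv.Perm

namespace SimpleGraph

variable {V : Type*} {G : SimpleGraph V} {α : Perm V}

theorem adj_apply_iff_not_adj (hα : ∀ x y, Gᶜ.Adj (α x) (α y) ↔ G.Adj x y) {x y : V}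
    (hxy : x ≠ y) : G.Adj (α x) (α y) ↔ ¬ G.Adj x y := by
  have h := hα x y
  rw [compl_adj] at h
  have := α.injective.ne hxy
  tauto

theorem adj_pow_apply_iff (hα : ∀ x y, Gᶜ.Adj (α x) (α y) ↔ G.Adj x y) {x y : V}
    (hxy : x ≠ y) (k : ℕ) : G.Adj ((α ^ k) x) ((α ^ k) y) ↔ (G.Adj x y ↔ Even k) := by
  induction k with
  | zero => simp
  | succ k ih =>
    rw [pow_succ', Perm.mul_apply, Perm.mul_apply,
      adj_apply_iff_not_adj hα ((α ^ k).injective.ne hxy), ih, Nat.even_add_one]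
    tauto

theorem sym2_pow_apply_ne_of_odd (hα : ∀ x y, Gᶜ.Adj (α x) (α y) ↔ G.Adj x y) {x y : V}
    (hxy : x ≠ y) {k : ℕ} (hk : Odd k) : s((α ^ k) x, (α ^ k) y) ≠ s(x, y) := by
  intro h
  have hadj := adj_pow_apply_iff hα hxy k
  rw [iff_false_intro (Nat.not_even_iff_odd.mpr hk), iff_false] at hadj
  rcases Sym2.eq_iff.mp h with ⟨h1, h2⟩ | ⟨h1, h2⟩
  · rw [h1, h2] at hadj
    tauto
  · rw [h1, h2, G.adj_comm] at hadj
    tauto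

end SimpleGraph

theorem compl_adj_apply_of_mapGraph_eq_compl {n : ℕ} {α : Perm (Fin n)}
    {G : SimpleGraph (Fin n)} (h : mapGraph α G = Gᶜ) (x y : Fin n) :
    Gᶜ.Adj (α x) (α y) ↔ G.Adj x y := by
  rw [← h]
  simp [mapGraph]

theorem stmt10_general (n : Nat) (α : Equiv.Perm (Fin n))
    (hG : ∃ G : SimpleGraph (Fin n), mapGraph α G = Gᶜ) :
    {x : Fin n | α x = x}.Subsingleton ∧
      ∀ x : Fin n, α x ≠ x → 4 ∣ (α.cycleOf x).support.card := by
  obtain ⟨G, hGc⟩ := hG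
  have hα := compl_adj_apply_of_mapGraph_eq_compl hGc
  refine ⟨fun x hx y hy => ?_, fun x hx => ?_⟩
  · by_contra hxy
    refine SimpleGraph.sym2_pow_apply_ne_of_odd hα hxy odd_one ?_
    rw [pow_one, show α x = x from hx, show α y = y from hy]
  · by_contra h4
    obtain ⟨k, hk, y, hyx, hfix⟩ := Perm.exists_odd_pow_fixing_pair_of_not_four_dvd hx h4
    exact SimpleGraph.sym2_pow_apply_ne_of_odd hα hyx.symm hk hfix

/-- If `n ≡ 0,1 (mod 4)` and `αG = Gᶜ` for some self-complementary graph `G`,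
then `α` has at most one fixed point and every cycle of `α` of length `≥ 2`
has length divisible by `4`. -/
theorem stmt10 (n : Nat) (hn : n % 4 = 0 ∨ n % 4 = 1) (α : Equiv.Perm (Fin n))
    (hG : ∃ G : SimpleGraph (Fin n), mapGraph α G = Gᶜ) :
    {x : Fin n | α x = x}.Subsingleton ∧
      ∀ x : Fin n, α x ≠ x → 4 ∣ (α.cycleOf x).support.card :=
  stmt10_general n α hG
end

section
/- Let n ≡ 0 or 1 (mod 4) with n ≥ 4, and let α ∈ S_n be a permutation with at most one fixed point such that every cycle of α of length at least 2 has length divisible by 4. Then there exists a self-complementary graph G on {1,...,n} with αG = complement of G. -/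
namespace Equiv.Perm

variable {β : Type*} [Fintype β] [DecidableEq β]

theorem pow_apply_eq_self_iff_card_support_cycleOf_dvd {σ : Perm β} {x : β} (hx : σ x ≠ x)
    {k : ℕ} : (σ ^ k) x = x ↔ (σ.cycleOf x).support.card ∣ k :=
  (σ.isCycleOn_support_cycleOf x).pow_apply_eq
    ((mem_support_cycleOf_iff' hx).2 (SameCycle.refl σ x))

/-- The colour of `x` is the parity of the distance from a fixed representative of its cycle. -/
theorem exists_zmod_two_apply_eq_add_one (σ : Perm β) :
    ∃ f : β → ZMod 2, ∀ x, σ x ≠ x → Even (σ.cycleOf x).support.card → f (σ x) = f x + 1 := by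
  let r : β → β := fun x => (Quotient.mk (SameCycle.setoid σ) x).out
  have hr : ∀ x, σ.SameCycle (r x) x := fun x => Quotient.mk_out (s := SameCycle.setoid σ) x
  choose d hd using fun x => (hr x).exists_nat_pow_eq
  refine ⟨fun x => d x, fun x hx heven => ?_⟩
  have hrσ : r (σ x) = r x :=
    congrArg Quotient.out (Quotient.sound (sameCycle_apply_left.2 (SameCycle.refl σ x)))
  have hpow : (σ ^ d (σ x)) (r x) = (σ ^ (d x + 1)) (r x) := by
    rw [← hrσ, hd, hrσ, pow_succ', mul_apply, hd]
  have hmod : d (σ x) ≡ d x + 1 [MOD (σ.cycleOf x).support.card] :=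
    ((σ.isCycleOn_support_cycleOf x).pow_apply_eq_pow_apply
      ((mem_support_cycleOf_iff' hx).2 (hr x).symm)).1 hpow
  show (d (σ x) : ZMod 2) = d x + 1
  exact_mod_cast (ZMod.natCast_eq_natCast_iff _ _ 2).2 (hmod.of_dvd heven.two_dvd)

theorem even_of_mk_pow_apply_eq {α : Perm β} (hfix : {x : β | α x = x}.Subsingleton)
    (hcyc : ∀ x : β, α x ≠ x → 4 ∣ (α.cycleOf x).support.card) {a b : β} (hab : a ≠ b) {m : ℕ}
    (hm : s((α ^ m) a, (α ^ m) b) = s(a, b)) : Even m := by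
  have four_dvd : ∀ {x : β} {k : ℕ}, α x ≠ x → (α ^ k) x = x → 4 ∣ k := fun hx hk =>
    (hcyc _ hx).trans ((pow_apply_eq_self_iff_card_support_cycleOf_dvd hx).1 hk)
  rcases Sym2.eq_iff.1 hm with ⟨ha, hb⟩ | ⟨ha, hb⟩
  · have hmoved : α a ≠ a ∨ α b ≠ b := by
      by_contra! h
      exact hab (hfix h.1 h.2)
    obtain ⟨k, rfl⟩ : 4 ∣ m := hmoved.elim (four_dvd · ha) (four_dvd · hb)
    exact ⟨2 * k, by ring⟩
  · have hα : α a ≠ a := fun h => hab (by rw [← ha, pow_apply_eq_self_of_apply_eq_self h])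
    obtain ⟨k, hk⟩ := four_dvd (k := 2 * m) hα (by rw [two_mul, pow_add, mul_apply, ha, hb])
    exact ⟨k, by omega⟩

end Equiv.Perm

open Equiv Perm

theorem pairPerm_pow_apply {n : ℕ} (α : Perm (Fin n)) (k : ℕ) (a b : Fin n) :
    (pairPerm α ^ k) s(a, b) = s((α ^ k) a, (α ^ k) b) := by
  induction k with
  | zero => rfl
  | succ k ih =>
    rw [pow_succ', pow_succ', mul_apply, ih]
    rfl

section

variable {n : ℕ} {α : Perm (Fin n)} (hfix : {x : Fin n | α x = x}.Subsingleton)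
  (hcyc : ∀ x : Fin n, α x ≠ x → 4 ∣ (α.cycleOf x).support.card)
include hfix hcyc

theorem pairPerm_apply_ne {a b : Fin n} (hab : a ≠ b) : pairPerm α s(a, b) ≠ s(a, b) :=
  fun h => Nat.not_even_one (even_of_mk_pow_apply_eq hfix hcyc hab (m := 1) h)

theorem even_card_support_cycleOf_pairPerm {a b : Fin n} (hab : a ≠ b) :
    Even ((pairPerm α).cycleOf s(a, b)).support.card := by
  refine even_of_mk_pow_apply_eq hfix hcyc hab ?_
  rw [← pairPerm_pow_apply]
  exact (isCycleOn_support_cycleOf _ _).pow_card_apply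
    ((mem_support_cycleOf_iff' (pairPerm_apply_ne hfix hcyc hab)).2 (SameCycle.refl _ _))

end

theorem mapGraph_fromEdgeSet_eq_compl {n : ℕ} (α : Perm (Fin n)) (f : Sym2 (Fin n) → ZMod 2)
    (hf : ∀ a b, a ≠ b → f (pairPerm α s(a, b)) = f s(a, b) + 1) :
    mapGraph α (SimpleGraph.fromEdgeSet {e | f e = 0}) =
      (SimpleGraph.fromEdgeSet {e | f e = 0})ᶜ := by
  ext a b
  simp only [mapGraph, SimpleGraph.fromEdgeSet_adj, SimpleGraph.compl_adj, Set.mem_ofPred_eq]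
  by_cases hab : a = b
  · simp [hab]
  · have key := hf _ _ (α.symm.injective.ne hab)
    simp only [pairPerm, coe_fn_mk, Sym2.map_mk, apply_symm_apply] at key
    simp only [key, hab, α.symm.injective.ne hab, ne_eq, not_false_eq_true, and_true, true_and]
    generalize f s(α.symm a, α.symm b) = z
    revert z
    decide

theorem stmt11_general (n : Nat)
    (α : Equiv.Perm (Fin n))
    (hfix : {x : Fin n | α x = x}.Subsingleton)
    (hcyc : ∀ x : Fin n, α x ≠ x → 4 ∣ (α.cycleOf x).support.card) :
    ∃ G : SimpleGraph (Fin n), mapGraph α G = Gᶜ := by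
  obtain ⟨f, hf⟩ := (pairPerm α).exists_zmod_two_apply_eq_add_one
  exact ⟨_, mapGraph_fromEdgeSet_eq_compl α f fun a b hab => hf _ (pairPerm_apply_ne hfix hcyc hab)
    (even_card_support_cycleOf_pairPerm hfix hcyc hab)⟩

/-- If `n ≡ 0,1 (mod 4)`, `n ≥ 4`, and `α` has at most one fixed point with all
cycles of length `≥ 2` of length divisible by `4`, then there is a self-complementary
graph `G` on `{1,...,n}` with `αG = Gᶜ`. -/
theorem stmt11 (n : Nat) (hn : n % 4 = 0 ∨ n % 4 = 1) (hn4 : 4 ≤ n)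
    (α : Equiv.Perm (Fin n))
    (hfix : {x : Fin n | α x = x}.Subsingleton)
    (hcyc : ∀ x : Fin n, α x ≠ x → 4 ∣ (α.cycleOf x).support.card) :
    ∃ G : SimpleGraph (Fin n), mapGraph α G = Gᶜ :=
  stmt11_general n α hfix hcyc
end

section
/- If some cycle of the induced pair permutation α' on 2-element subsets of {1,...,n} has odd length, then α has either at least two fixed points or some cycle of length ≥ 2 whose length is not divisible by 4. -/
set_option linter.unusedVariables false

/-!
Let `m` be the odd length of the `α'`-cycle through a pair `{a, b}` with `a ≠ b`. Then `α'^m`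
fixes `{a, b}`, so `α^m` either fixes both `a` and `b` or swaps them. In the first case `a` and
`b` are fixed points of `α` or lie on cycles whose lengths divide the odd number `m`. In the
second, `a` is moved and the length of its cycle divides `2m`, so it is not divisible by `4`.
-/

namespace Equiv.Perm

variable {α : Type*} [Fintype α] [DecidableEq α]

theorem natCard_sameCycle_eq_card_support_cycleOf {f : Perm α} {x : α} (hx : f x ≠ x) :
    Nat.card {y // f.SameCycle x y} = (f.cycleOf x).support.card := by
  rw [← Nat.card_eq_finsetCard]
  exact Nat.card_congr (Equiv.subtypeEquivRight fun y => (mem_support_cycleOf_iff' hx).symm)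

theorem pow_natCard_sameCycle_apply_self (f : Perm α) (x : α) :
    (f ^ Nat.card {y // f.SameCycle x y}) x = x := by
  by_cases hx : f x = x
  · exact pow_apply_eq_self_of_apply_eq_self hx _
  · rw [natCard_sameCycle_eq_card_support_cycleOf hx, ← pow_mod_card_support_cycleOf_self_apply,
      Nat.mod_self, pow_zero, one_apply]

theorem card_support_cycleOf_dvd_of_pow_apply_eq_self {f : Perm α} {x : α} (hx : f x ≠ x)
    {k : ℕ} (hk : (f ^ k) x = x) : (f.cycleOf x).support.card ∣ k :=
  ((f.isCycleOn_support_cycleOf x).pow_apply_eq (mem_support_cycleOf_iff' hx |>.2 .rfl)).1 hk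

end Equiv.Perm

theorem pairPerm_pow_apply_s13 {n : ℕ} (α : Equiv.Perm (Fin n)) (k : ℕ) (z : Sym2 (Fin n)) :
    (pairPerm α ^ k) z = Sym2.map ⇑(α ^ k) z := by
  induction k generalizing z with
  | zero => simp
  | succ k ih =>
    rw [pow_succ, Equiv.Perm.mul_apply, ih, pow_succ, Equiv.Perm.coe_mul, ← Sym2.map_map]
    rfl

/-- If some cycle of the induced pair permutation `α'` on 2-element subsets has
odd length, then `α` has at least two fixed points or some cycle of length `≥ 2`
whose length is not divisible by `4`. -/
theorem stmt13 (n : Nat) (α : Equiv.Perm (Fin n)) (e : Sym2 (Fin n))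
    (he : ¬ e.IsDiag)
    (hodd : ¬ 2 ∣ Nat.card {f : Sym2 (Fin n) // (pairPerm α).SameCycle e f}) :
    ¬ {x : Fin n | α x = x}.Subsingleton ∨
      ∃ x : Fin n, α x ≠ x ∧ ¬ 4 ∣ (α.cycleOf x).support.card := by
  by_contra! ⟨hfix, hcyc⟩
  set m := Nat.card {f : Sym2 (Fin n) // (pairPerm α).SameCycle e f}
  have fixed_or_four_dvd {x : Fin n} {k : ℕ} (hk : (α ^ k) x = x) : α x = x ∨ 4 ∣ k :=
    or_iff_not_imp_left.2 fun hx =>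
      (hcyc x hx).trans (α.card_support_cycleOf_dvd_of_pow_apply_eq_self hx hk)
  have hm := (pairPerm α).pow_natCard_sameCycle_apply_self e
  induction e using Sym2.ind with | _ a b => ?_
  have hab : a ≠ b := by simpa using he
  rw [pairPerm_pow_apply_s13, Sym2.map_mk, Sym2.eq_iff] at hm
  rcases hm with ⟨ha, hb⟩ | ⟨ha, hb⟩
  · have h4m : ¬ 4 ∣ m := fun h4 => hodd ((by norm_num : 2 ∣ 4).trans h4)
    exact hab (hfix ((fixed_or_four_dvd ha).resolve_right h4m)
      ((fixed_or_four_dvd hb).resolve_right h4m))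
  · have h2m : (α ^ (2 * m)) a = a := by rw [two_mul, pow_add, Equiv.Perm.mul_apply, ha, hb]
    rcases fixed_or_four_dvd h2m with hfa | h4
    · exact hab ((α.pow_apply_eq_self_of_apply_eq_self hfa m).symm.trans ha)
    · omega
end
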